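/- arXiv:2205.03911 — 2 statements merged into one kernel-verified Lean document; each statement's English description precedes it below -/
import Mathlib

section
/- Fix an integer q ≥ 2 and an alphabet Σ_q of size q. Let p ≥ 2, let n be an integer with n ≥ p and n ≥ 2p−4, and let S be a nonempty subset of {1, 2, …, p−1}. Then a vector s ∈ Σ_q^n has every element of S as a period if and only if s has gcd(S) as a period. Consequently, the set of vectors in Σ_q^n having every element of S as a period has the same cardinality as the set of vectors in Σ_q^n having gcd(S) as a period. -/
/-- `p` is a period of the vector `s = (s_1, …, s_n)` (0-indexed here):
`s_i = s_{i+p}` for all valid indices. -/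
def IsPeriod {α : Type*} {n : ℕ} (s : Fin n → α) (p : ℕ) : Prop :=
  ∀ i : ℕ, ∀ h : i + p < n,
    s ⟨i, lt_of_le_of_lt (Nat.le_add_right i p) h⟩ = s ⟨i + p, h⟩

/-- The window of length `ℓ` of `s` starting at (0-indexed) position `i`. -/
def window {α : Type*} {n : ℕ} (s : Fin n → α) (i ℓ : ℕ) (h : i + ℓ ≤ n) :
    Fin ℓ → α :=
  fun j => s ⟨i + j, Nat.lt_of_lt_of_le (Nat.add_lt_add_left j.isLt i) h⟩

/-- `s` is an `ℓ`-window `p`-least-period avoiding vector: no window of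
length `ℓ` has any period `p'` with `1 ≤ p' < p`. -/
def LPAvoiding {α : Type*} {n : ℕ} (ℓ p : ℕ) (s : Fin n → α) : Prop :=
  ∀ i : ℕ, ∀ h : i + ℓ ≤ n, ∀ p', 1 ≤ p' → p' < p →
    ¬ IsPeriod (window s i ℓ h) p'

/-- `s` is an `ℓ`-window `p`-period avoiding vector: no window of
length `ℓ` has period `p`. -/
def PAvoiding {α : Type*} {n : ℕ} (ℓ p : ℕ) (s : Fin n → α) : Prop :=
  ∀ i : ℕ, ∀ h : i + ℓ ≤ n, ¬ IsPeriod (window s i ℓ h) p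

/-- `s` satisfies the `k`-RLL constraint w.r.t. the zero symbol `z`:
no window of length `k` consists entirely of `z`. -/
def RLLok {α : Type*} {n : ℕ} (z : α) (k : ℕ) (s : Fin n → α) : Prop :=
  ∀ i : ℕ, ∀ h : i + k ≤ n, ∃ j : Fin k, window s i k h j ≠ z

/-- period `p` on the prefix of length `m` of an infinite word `t`. -/
def Per {α : Type*} (t : ℕ → α) (m p : ℕ) : Prop :=
  ∀ i, i + p < m → t i = t (i + p)

lemma Per.chain {α : Type*} {t : ℕ → α} {m p : ℕ} (h : Per t m p) :
    ∀ k i, i + k * p < m → t i = t (i + k * p) := by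
  intro k
  induction k with
  | zero => simp
  | succ k ih =>
    intro i hi
    have e : (k + 1) * p = k * p + p := Nat.succ_mul k p
    rw [e, ← Nat.add_assoc]
    have h1 := ih i (by omega)
    have h2 := h (i + k * p) (by omega)
    rw [h1, h2]

/-- extension step: if `t` has period `a` on the prefix of length `m` and
period `g ∣ a` on the prefix of length `m - a`, with `a ≤ m - a`, then `t`
has period `g` on the whole prefix of length `m`. -/
lemma Per.extend {α : Type*} {t : ℕ → α} {m a g : ℕ} (hg : 0 < g)
    (hga : g ∣ a) (hlt : g < a) (ham : a ≤ m - a)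
    (hPa : Per t m a) (hPg : Per t (m - a) g) : Per t m g := by
  have hm : 2 * a ≤ m := by omega
  intro i hig
  by_cases hcase : i + g < m - a
  · exact hPg i hcase
  · push_neg at hcase
    by_cases hia : a ≤ i
    · -- shift both down by a
      have e1 : t (i - a) = t i := by
        have := hPa (i - a) (by omega)
        rw [this]; congr 1; omega
      have e2 : t (i - a + g) = t (i + g) := by
        have := hPa (i - a + g) (by omega)
        rw [this]; congr 1; omega
      have e3 : t (i - a) = t (i - a + g) := hPg (i - a) (by omega)
      rw [← e1, e3, e2]
    · push_neg at hia
      -- i < a, shift the right endpoint down by a and chain up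
      have hjge : a ≤ i + g := by omega
      have e2 : t (i + g - a) = t (i + g) := by
        have := hPa (i + g - a) (by omega)
        rw [this]; congr 1; omega
      obtain ⟨c, hc⟩ := hga
      have h2 : c * g = a := by rw [Nat.mul_comm c g, ← hc]
      have hc1 : 1 ≤ c := by
        rcases Nat.eq_zero_or_pos c with h0 | h1
        · subst h0; simp at hc; omega
        · exact h1
      have key : (c - 1) * g + g = a := by
        have h1 : (c - 1) * g = c * g - g := Nat.sub_one_mul c g
        have h3 : g ≤ c * g := Nat.le_mul_of_pos_left g hc1
        omega
      have e3 : t (i + g - a) = t (i + g - a + (c - 1) * g) :=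
        hPg.chain (c - 1) (i + g - a) (by omega)
      have e4 : i + g - a + (c - 1) * g = i := by omega
      rw [← e2, e3, e4]

/-- Fine–Wilf for prefixes, assuming `a ≤ b`. -/
lemma fine_wilf_le {α : Type*} : ∀ N (t : ℕ → α) (m a b : ℕ), a + b ≤ N →
    0 < a → a ≤ b → Per t m a → Per t m b →
    a + b - Nat.gcd a b ≤ m → Per t m (Nat.gcd a b) := by
  intro N
  induction N with
  | zero => intro t m a b h ha; omega
  | succ N ih =>
    intro t m a b hN ha hab hPa hPb hm
    set g := Nat.gcd a b with hgdef
    have hga : g ∣ a := Nat.gcd_dvd_left a b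
    have hgb : g ∣ b := Nat.gcd_dvd_right a b
    have hg : 0 < g := Nat.gcd_pos_of_pos_left b ha
    by_cases heq : a = b
    · subst heq
      have : g = a := Nat.gcd_self a
      rw [this]; exact hPa
    · have haltb : a < b := lt_of_le_of_ne hab heq
      by_cases hgeqa : g = a
      · rw [hgeqa]; exact hPa
      · have hglt : g < a := lt_of_le_of_ne (Nat.le_of_dvd ha hga) hgeqa
        -- b - a > 0, divisible by g
        have hba : g ∣ b - a := Nat.dvd_sub hgb hga
        have hbag : g ≤ b - a := Nat.le_of_dvd (by omega) hba
        set b' := b - a with hb'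
        have hb'pos : 0 < b' := by omega
        -- prefix of length m - a has periods a and b'
        have hPa' : Per t (m - a) a := fun i hi => hPa i (by omega)
        have hPb' : Per t (m - a) b' := by
          intro i hi
          have h1 : t i = t (i + b) := hPb i (by omega)
          have h2 : t (i + b') = t (i + b' + a) := hPa (i + b') (by omega)
          have e : i + b' + a = i + b := by omega
          rw [h1, h2, e]
        have hgcd' : Nat.gcd a b' = g := by
          rw [hb', hgdef, Nat.gcd_comm a (b - a), Nat.gcd_comm a b]
          exact Nat.gcd_sub_self_left (le_of_lt haltb)
        have hm' : a + b' - Nat.gcd a b' ≤ m - a := by rw [hgcd']; omega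
        have hPg' : Per t (m - a) g := by
          rcases le_or_gt a b' with h1 | h1
          · have := ih t (m - a) a b' (by omega) ha h1 hPa' hPb' hm'
            rwa [hgcd'] at this
          · have := ih t (m - a) b' a (by omega) hb'pos (le_of_lt h1) hPb' hPa'
              (by rw [Nat.gcd_comm, hgcd']; omega)
            rwa [Nat.gcd_comm, hgcd'] at this
        -- extend to the whole prefix
        exact Per.extend hg hga hglt (by omega) hPa hPg'

lemma fine_wilf {α : Type*} (t : ℕ → α) (m a b : ℕ)
    (ha : 0 < a) (hb : 0 < b) (hPa : Per t m a) (hPb : Per t m b)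
    (hm : a + b - Nat.gcd a b ≤ m) : Per t m (Nat.gcd a b) := by
  rcases le_or_gt a b with h | h
  · exact fine_wilf_le (a + b) t m a b le_rfl ha h hPa hPb hm
  · rw [Nat.gcd_comm]
    exact fine_wilf_le (a + b) t m b a (by omega) hb (le_of_lt h) hPb hPa
      (by rw [Nat.gcd_comm]; omega)

lemma Per.of_dvd {α : Type*} {t : ℕ → α} {m g x : ℕ} (h : Per t m g)
    (hd : g ∣ x) : Per t m x := by
  obtain ⟨k, rfl⟩ := hd
  intro i hi
  have := h.chain k i (by rw [Nat.mul_comm]; omega)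
  rw [this]; congr 1; rw [Nat.mul_comm]

lemma gcd_range {p : ℕ} (S : Finset ℕ) (hS : S.Nonempty)
    (hSsub : ∀ x ∈ S, 1 ≤ x ∧ x ≤ p - 1) :
    1 ≤ S.gcd id ∧ S.gcd id ≤ p - 1 := by
  obtain ⟨x, hx⟩ := hS
  have hd : S.gcd id ∣ x := Finset.gcd_dvd hx
  have hx1 := hSsub x hx
  have hpos : 0 < S.gcd id := by
    rcases Nat.eq_zero_or_pos (S.gcd id) with h0 | h1
    · rw [h0] at hd; have := Nat.eq_zero_of_zero_dvd hd; omega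
    · exact h1
  exact ⟨hpos, le_trans (Nat.le_of_dvd (by omega) hd) hx1.2⟩

lemma per_gcd {α : Type*} (t : ℕ → α) (p n : ℕ) (hp : 2 ≤ p) (hn1 : p ≤ n)
    (hn2 : 2 * p - 4 ≤ n) :
    ∀ (S : Finset ℕ), S.Nonempty → (∀ x ∈ S, 1 ≤ x ∧ x ≤ p - 1) →
      (∀ x ∈ S, Per t n x) → Per t n (S.gcd id) := by
  have hbound : ∀ a b : ℕ, 1 ≤ a → a ≤ p - 1 → 1 ≤ b → b ≤ p - 1 →
      a + b - Nat.gcd a b ≤ n := by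
    intro a b ha1 ha2 hb1 hb2
    rcases Nat.lt_trichotomy a b with h | h | h
    · have h1 : Nat.gcd a b ∣ b - a :=
        Nat.dvd_sub (Nat.gcd_dvd_right a b) (Nat.gcd_dvd_left a b)
      have h2 : Nat.gcd a b ≤ b - a := Nat.le_of_dvd (by omega) h1
      have h3 : 1 ≤ Nat.gcd a b := Nat.gcd_pos_of_pos_left b (by omega)
      omega
    · subst h; rw [Nat.gcd_self]; omega
    · have h1 : Nat.gcd a b ∣ a - b :=
        Nat.dvd_sub (Nat.gcd_dvd_left a b) (Nat.gcd_dvd_right a b)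
      have h2 : Nat.gcd a b ≤ a - b := Nat.le_of_dvd (by omega) h1
      have h3 : 1 ≤ Nat.gcd a b := Nat.gcd_pos_of_pos_left b (by omega)
      omega
  intro S hS
  induction hS using Finset.Nonempty.cons_induction with
  | singleton a =>
    intro hsub hper
    rw [Finset.gcd_singleton, id_eq, normalize_eq]
    exact hper a (Finset.mem_singleton_self a)
  | cons a T hnotmem hT ih =>
    intro hsub hper
    rw [Finset.cons_eq_insert, Finset.gcd_insert, id_eq, gcd_eq_nat_gcd]
    have hTsub : ∀ x ∈ T, 1 ≤ x ∧ x ≤ p - 1 := fun x hx =>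
      hsub x (Finset.mem_cons_of_mem hx)
    have hTper : ∀ x ∈ T, Per t n x := fun x hx =>
      hper x (Finset.mem_cons_of_mem hx)
    have hPb := ih hTsub hTper
    have hb := gcd_range T hT hTsub
    have ha := hsub a (Finset.mem_cons_self a T)
    exact fine_wilf t n a (T.gcd id) (by omega) (by omega)
      (hper a (Finset.mem_cons_self a T)) hPb
      (hbound a (T.gcd id) ha.1 ha.2 hb.1 hb.2)

lemma isPeriod_iff_per {α : Type*} {n : ℕ} (s : Fin n → α) (hn0 : 0 < n)
    (p' : ℕ) :
    IsPeriod s p' ↔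
      Per (fun i => if h : i < n then s ⟨i, h⟩ else s ⟨0, hn0⟩) n p' := by
  constructor
  · intro hP i hi
    have h1 : i < n := by omega
    simp only [dif_pos h1, dif_pos hi]
    exact hP i hi
  · intro hP i hi
    have h1 : i < n := by omega
    have := hP i hi
    simp only [dif_pos h1, dif_pos hi] at this
    exact this


/-- For a nonempty `S ⊆ {1,…,p−1}` (`p ≥ 2`, `n ≥ p`, `n ≥ 2p−4`), a vector
`s ∈ Σ_q^n` has every element of `S` as a period iff it has `gcd(S)` as a
period; consequently the corresponding sets of vectors have equal
cardinality. -/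
theorem periods_of_set_iff_gcd
    {q : ℕ} (hq : 2 ≤ q) (Sigma : Type*) [Fintype Sigma]
    (hcard : Fintype.card Sigma = q)
    (p n : ℕ) (hp : 2 ≤ p) (hn1 : p ≤ n) (hn2 : 2 * p - 4 ≤ n)
    (S : Finset ℕ) (hS : S.Nonempty) (hSsub : ∀ x ∈ S, 1 ≤ x ∧ x ≤ p - 1) :
    (∀ s : Fin n → Sigma, (∀ x ∈ S, IsPeriod s x) ↔ IsPeriod s (S.gcd id)) ∧
    Nat.card {s : Fin n → Sigma // ∀ x ∈ S, IsPeriod s x} =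
      Nat.card {s : Fin n → Sigma // IsPeriod s (S.gcd id)} := by
  have hn0 : 0 < n := by omega
  have main : ∀ s : Fin n → Sigma,
      (∀ x ∈ S, IsPeriod s x) ↔ IsPeriod s (S.gcd id) := by
    intro s
    constructor
    · intro h
      rw [isPeriod_iff_per s hn0]
      exact per_gcd _ p n hp hn1 hn2 S hS hSsub
        (fun x hx => (isPeriod_iff_per s hn0 x).1 (h x hx))
    · intro h x hx
      rw [isPeriod_iff_per s hn0] at h ⊢
      exact h.of_dvd (Finset.gcd_dvd hx)
  exact ⟨main, Nat.card_congr (Equiv.subtypeEquivRight main)⟩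
end

section
/- Fix an integer q ≥ 2 and an alphabet Σ_q of size q. Let n, ℓ, p, k be integers with p ≥ 2, k ≥ 1, k dividing n, ℓ even, ℓ/2 ≤ n/k, and ℓ ≥ 2·(⌈log_q(n/k − ℓ/2 + 2)⌉ + p + 1). Then a_q(n+k, ℓ, p) ≥ q^n; equivalently, there exists an injective map from Σ_q^n into A_q(n+k, ℓ, p), i.e., an ℓ-window p-least-period avoiding code with k redundancy symbols. -/
private lemma fin_app_congr {α : Type*} {N : ℕ} (x : Fin N → α) {v w : ℕ}
    (hv : v < N) (hw : w < N) (h : v = w) : x ⟨v, hv⟩ = x ⟨w, hw⟩ := by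
  subst h; rfl


private lemma le_pow_ceil_logb {q T : ℕ} (hq : 2 ≤ q) (hT : 1 ≤ T) :
    T ≤ q ^ ⌈Real.logb q T⌉₊ := by
  have hq1 : (1:ℝ) < q := by exact_mod_cast (by omega : 1 < q)
  have hT0 : (0:ℝ) < T := by exact_mod_cast (by omega : 0 < T)
  have h1 : (T:ℝ) = (q:ℝ) ^ (Real.logb q T) := (Real.rpow_logb (by linarith) (by linarith) hT0).symm
  have h2 : (q:ℝ) ^ (Real.logb q T) ≤ (q:ℝ) ^ ((⌈Real.logb q T⌉₊ : ℝ)) :=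
    Real.rpow_le_rpow_of_exponent_le (le_of_lt hq1) (Nat.le_ceil _)
  have h3 : ((q ^ ⌈Real.logb q T⌉₊ : ℕ) : ℝ) = (q:ℝ) ^ ((⌈Real.logb q T⌉₊:ℝ)) := by
    push_cast
    rw [Real.rpow_natCast]
  have : (T:ℝ) ≤ ((q ^ ⌈Real.logb q T⌉₊ : ℕ) : ℝ) := by rw [h3]; linarith
  exact_mod_cast this

private lemma fin_app_congr2 {α : Type*} {k N : ℕ} (g : Fin k → Fin N → α)
    {b1 b2 v1 v2 : ℕ} (hb1 : b1 < k) (hb2 : b2 < k) (hv1 : v1 < N) (hv2 : v2 < N)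
    (hb : b1 = b2) (hv : v1 = v2) : g ⟨b1, hb1⟩ ⟨v1, hv1⟩ = g ⟨b2, hb2⟩ ⟨v2, hv2⟩ := by
  subst hb; subst hv; rfl

attribute [local instance] Classical.propDecidable

private lemma bad_card {q : ℕ} {Sigma : Type*} [Fintype Sigma] (hq : 1 ≤ q) (hcard : Fintype.card Sigma = q)
    {L h p' i : ℕ} (hp' : 1 ≤ p') (hi : i + h ≤ L) :
    Fintype.card {x : Fin L → Sigma // IsPeriod (window x i h hi) p'} ≤ q ^ (L - h + p') := by
  classical
  set D : Fin L → Prop := fun j => i + p' ≤ j.val ∧ j.val < i + h with hD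
  -- the restriction map
  have finj : Function.Injective
      (fun (x : {x : Fin L → Sigma // IsPeriod (window x i h hi) p'}) =>
        (fun (j : {j : Fin L // ¬ D j}) => x.val j.val)) := by
    intro x y hxy
    ext j
    obtain ⟨v, hv⟩ := j
    induction v using Nat.strong_induction_on with
    | _ v ih =>
      by_cases hDv : i + p' ≤ v ∧ v < i + h
      · have hj : (v - i - p') + p' < h := by omega
        have hx := x.2 (v - i - p') hj
        have hy := y.2 (v - i - p') hj
        simp only [window] at hx hy
        have ex1 : x.1 ⟨v, hv⟩ = x.1 ⟨v - p', by omega⟩ := by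
          rw [fin_app_congr x.1 hv (by omega : i + ((v - i - p') + p') < L) (by omega)]
          rw [← hx]
          exact fin_app_congr x.1 _ _ (by omega)
        have ey1 : y.1 ⟨v, hv⟩ = y.1 ⟨v - p', by omega⟩ := by
          rw [fin_app_congr y.1 hv (by omega : i + ((v - i - p') + p') < L) (by omega)]
          rw [← hy]
          exact fin_app_congr y.1 _ _ (by omega)
        rw [ex1, ey1]
        exact ih (v - p') (by omega) (by omega)
      · exact congrFun hxy ⟨⟨v, hv⟩, hDv⟩
  have hle := Fintype.card_le_of_injective _ finj
  have hfun : Fintype.card ({j : Fin L // ¬ D j} → Sigma)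
      = q ^ (Fintype.card {j : Fin L // ¬ D j}) := by
    rw [Fintype.card_fun, hcard]
  have hcompl : Fintype.card {j : Fin L // ¬ D j}
      = L - Fintype.card {j : Fin L // D j} := by
    rw [Fintype.card_subtype_compl, Fintype.card_fin]
  have hDcard : h - p' ≤ Fintype.card {j : Fin L // D j} := by
    have : Function.Injective (fun (a : Fin (h - p')) =>
        (⟨⟨i + p' + a.val, by omega⟩, by simp [hD]; omega⟩ : {j : Fin L // D j})) := by
      intro a b hab
      have : i + p' + a.val = i + p' + b.val := congrArg (fun z => z.val.val) hab
      exact Fin.ext (by omega)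
    have := Fintype.card_le_of_injective _ this
    simpa using this
  calc Fintype.card {x : Fin L → Sigma // IsPeriod (window x i h hi) p'}
      ≤ q ^ (Fintype.card {j : Fin L // ¬ D j}) := by rw [← hfun]; exact hle
    _ ≤ q ^ (L - h + p') := by
        apply Nat.pow_le_pow_right hq
        omega

private lemma geom_aux {q : ℕ} (hq : 2 ≤ q) : ∀ m : ℕ, ∑ x ∈ Finset.Ico 1 (m+1), q ^ x ≤ 2 * q ^ m := by
  intro m
  induction m with
  | zero => simp
  | succ m ih =>
    rw [Finset.sum_Ico_succ_top (by omega)]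
    have h1 : 2 * q ^ m ≤ q ^ (m+1) := by
      rw [pow_succ]
      calc 2 * q ^ m = q ^ m * 2 := by ring
      _ ≤ q ^ m * q := Nat.mul_le_mul_left _ hq
    omega

open Finset in
private lemma block_count {q : ℕ} {Sigma : Type*} [Fintype Sigma] (hq : 2 ≤ q)
    (hcard : Fintype.card Sigma = q) {L h p c : ℕ} (hp : 2 ≤ p)
    (hhL : h + 1 ≤ L) (hhp : p + 1 + c ≤ h) (hTc : L - h + 1 ≤ q ^ c) :
    q ^ (L - 1) ≤ Fintype.card {x : Fin L → Sigma // LPAvoiding h p x} := by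
  classical
  have hq1 : 1 ≤ q := by omega
  -- total count
  have htot : Fintype.card (Fin L → Sigma) = q ^ L := by
    rw [Fintype.card_fun, hcard, Fintype.card_fin]
  -- the bad sets
  set Bad : ℕ → ℕ → Finset (Fin L → Sigma) := fun i p' =>
    univ.filter (fun x => ∃ hi : i + h ≤ L, IsPeriod (window x i h hi) p') with hBad
  have hbadcard : ∀ i p', i + h ≤ L → 1 ≤ p' → (Bad i p').card ≤ q ^ (L - h + p') := by
    intro i p' hi hp1
    have heq : (Bad i p') = univ.filter (fun x => IsPeriod (window x i h hi) p') := by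
      simp only [hBad]
      ext x
      simp only [Finset.mem_filter, Finset.mem_univ, true_and]
      exact ⟨fun ⟨_, hh⟩ => hh, fun hh => ⟨hi, hh⟩⟩
    rw [heq, ← Fintype.card_subtype]
    exact bad_card hq1 hcard hp1 hi
  -- complement is contained in the union of bad sets
  have hsub : (univ.filter (fun x : Fin L → Sigma => ¬ LPAvoiding h p x)) ⊆
      ((range (L - h + 1)) ×ˢ (Ico 1 p)).biUnion (fun ip => Bad ip.1 ip.2) := by
    intro x hx
    simp only [mem_filter, mem_univ, true_and] at hx
    rw [LPAvoiding] at hx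
    push_neg at hx
    obtain ⟨i, hi, p', hp1, hp2, hper⟩ := hx
    apply Finset.mem_biUnion.mpr
    refine ⟨(i, p'), ?_, ?_⟩
    · simp only [mem_product, mem_range, mem_Ico]
      exact ⟨by omega, hp1, hp2⟩
    · simp only [hBad, mem_filter, mem_univ, true_and]
      exact ⟨hi, hper⟩
  -- count the bad part
  have hbad : (univ.filter (fun x : Fin L → Sigma => ¬ LPAvoiding h p x)).card
      ≤ (L - h + 1) * (2 * q ^ (L - h + (p - 1))) := by
    calc (univ.filter (fun x : Fin L → Sigma => ¬ LPAvoiding h p x)).card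
        ≤ (((range (L - h + 1)) ×ˢ (Ico 1 p)).biUnion (fun ip => Bad ip.1 ip.2)).card :=
          Finset.card_le_card hsub
      _ ≤ ∑ ip ∈ (range (L - h + 1)) ×ˢ (Ico 1 p), (Bad ip.1 ip.2).card :=
          Finset.card_biUnion_le
      _ = ∑ i ∈ range (L - h + 1), ∑ p' ∈ Ico 1 p, (Bad i p').card := by
          rw [Finset.sum_product]
      _ ≤ ∑ i ∈ range (L - h + 1), ∑ p' ∈ Ico 1 p, q ^ (L - h + p') := by
          apply Finset.sum_le_sum
          intro i hi
          apply Finset.sum_le_sum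
          intro p' hp'
          simp only [mem_range] at hi
          simp only [mem_Ico] at hp'
          exact hbadcard i p' (by omega) hp'.1
      _ ≤ ∑ i ∈ range (L - h + 1), 2 * q ^ (L - h + (p - 1)) := by
          apply Finset.sum_le_sum
          intro i _
          have : ∀ p'' ∈ Ico 1 p, q ^ (L - h + p'') = q ^ (L - h) * q ^ p'' := by
            intro p'' _; rw [pow_add]
          rw [Finset.sum_congr rfl this, ← Finset.mul_sum]
          have hgeo : ∑ p'' ∈ Ico 1 p, q ^ p'' ≤ 2 * q ^ (p - 1) := by
            have := geom_aux hq (p - 1)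
            have hpe : p - 1 + 1 = p := by omega
            rw [hpe] at this
            exact this
          calc q ^ (L - h) * ∑ p'' ∈ Ico 1 p, q ^ p''
              ≤ q ^ (L - h) * (2 * q ^ (p - 1)) := Nat.mul_le_mul_left _ hgeo
            _ = 2 * q ^ (L - h + (p - 1)) := by rw [pow_add]; ring
      _ = (L - h + 1) * (2 * q ^ (L - h + (p - 1))) := by
          rw [Finset.sum_const, card_range, smul_eq_mul]
  -- arithmetic
  have harith : (L - h + 1) * (2 * q ^ (L - h + (p - 1))) ≤ q ^ (L - 1) := by
    calc (L - h + 1) * (2 * q ^ (L - h + (p - 1)))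
        ≤ q ^ c * (2 * q ^ (L - h + (p - 1))) :=
          Nat.mul_le_mul_right _ hTc
      _ = 2 * q ^ (c + (L - h + (p - 1))) := by rw [pow_add]; ring
      _ ≤ q * q ^ (L - 2) := by
          apply Nat.mul_le_mul hq
          apply Nat.pow_le_pow_right hq1
          omega
      _ = q ^ (L - 1) := by
          rw [← pow_succ']
          congr 1
          omega
  -- put together
  have hsplit : (univ.filter (fun x : Fin L → Sigma => LPAvoiding h p x)).card
      + (univ.filter (fun x : Fin L → Sigma => ¬ LPAvoiding h p x)).card = q ^ L := by
    rw [Finset.card_filter_add_card_filter_not, card_univ, htot]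
  have hLL : 2 * q ^ (L - 1) ≤ q ^ L := by
    calc 2 * q ^ (L - 1) ≤ q * q ^ (L - 1) := Nat.mul_le_mul_right _ hq
      _ = q ^ L := by rw [← pow_succ']; congr 1; omega
  have : Fintype.card {x : Fin L → Sigma // LPAvoiding h p x}
      = (univ.filter (fun x : Fin L → Sigma => LPAvoiding h p x)).card :=
    Fintype.card_subtype _
  omega

private lemma concat_lpa {Sigma : Type*} {t k ℓ p h m : ℕ} (hℓ2 : ℓ = 2 * h)
    (hh1 : 1 ≤ h) (hht : h ≤ t) (hm : m = k * (t + 1))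
    (xs : Fin k → (Fin (t + 1) → Sigma)) (hxs : ∀ b, LPAvoiding h p (xs b))
    (s : Fin m → Sigma)
    (hs : ∀ (β j : ℕ) (hβ : β < k) (hj : j < t + 1) (hv : β * (t + 1) + j < m),
        s ⟨β * (t + 1) + j, hv⟩ = xs ⟨β, hβ⟩ ⟨j, hj⟩) :
    LPAvoiding ℓ p s := by
  intro i hle p' hp1 hp2 hper
  have hdm := Nat.div_add_mod i (t + 1)
  have hmod : i % (t + 1) < t + 1 := Nat.mod_lt _ (by omega)
  set β := i / (t + 1) with hβdef
  have key : ∃ (β' a : ℕ), β' < k ∧ β' * (t + 1) ≤ a ∧ a + h ≤ β' * (t + 1) + (t + 1)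
      ∧ i ≤ a ∧ a + h ≤ i + ℓ := by
    have hcm : β * (t + 1) = (t + 1) * β := Nat.mul_comm _ _
    by_cases hc : i + h ≤ (t + 1) * β + (t + 1)
    · refine ⟨β, i, ?_, by omega, by omega, le_refl _, by omega⟩
      by_contra hkb
      push_neg at hkb
      have h2 : k * (t + 1) ≤ β * (t + 1) := Nat.mul_le_mul_right _ hkb
      omega
    · have hexp : (β + 1) * (t + 1) = (t + 1) * β + (t + 1) := by ring
      refine ⟨β + 1, (t + 1) * β + (t + 1), ?_, by omega, by omega, by omega, by omega⟩
      by_contra hkb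
      push_neg at hkb
      have h2 : k * (t + 1) ≤ (β + 1) * (t + 1) := Nat.mul_le_mul_right _ hkb
      omega
  obtain ⟨β', a, hβ'k, hba1, hba2, hia, hahl⟩ := key
  set d := a - β' * (t + 1) with hddef
  have hda : β' * (t + 1) + d = a := by omega
  have hd : d + h ≤ t + 1 := by omega
  refine hxs ⟨β', hβ'k⟩ d hd p' hp1 hp2 ?_
  intro j hj
  simp only [window]
  simp only [IsPeriod, window] at hper
  have hper' := hper (a - i + j) (by omega)
  calc (xs ⟨β', hβ'k⟩) ⟨d + ↑(⟨j, by omega⟩ : Fin h), by omega⟩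
      = s ⟨β' * (t + 1) + (d + j), by omega⟩ := by
        rw [hs β' (d + j) hβ'k (by omega) (by omega)]
    _ = s ⟨i + (a - i + j), by omega⟩ := fin_app_congr s _ _ (by omega)
    _ = s ⟨i + (a - i + j + p'), by omega⟩ := hper'
    _ = s ⟨β' * (t + 1) + (d + (j + p')), by omega⟩ := fin_app_congr s _ _ (by omega)
    _ = (xs ⟨β', hβ'k⟩) ⟨d + ↑(⟨j + p', hj⟩ : Fin h), by omega⟩ := by
        rw [hs β' (d + (j + p')) hβ'k (by omega) (by omega)]

/-- Construction 3: for `p ≥ 2`, `k ≥ 1`, `k ∣ n`, `ℓ` even, `ℓ/2 ≤ n/k`, and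
`ℓ ≥ 2·(⌈log_q(n/k − ℓ/2 + 2)⌉ + p + 1)`, we have `a_q(n+k, ℓ, p) ≥ q^n`,
i.e. an `(ℓ,p)`-LPA code with `k` redundancy symbols exists. -/
theorem lpa_k_redundancy_construction
    {q : ℕ} (hq : 2 ≤ q) (Sigma : Type*) [Fintype Sigma]
    (hcard : Fintype.card Sigma = q)
    (n ℓ p k : ℕ) (hp : 2 ≤ p) (hk : 1 ≤ k) (hkn : k ∣ n)
    (hle : Even ℓ) (hlnk : ℓ / 2 ≤ n / k)
    (hℓ : ℓ ≥ 2 * (⌈Real.logb q (((n / k : ℕ) : ℝ) - ((ℓ / 2 : ℕ) : ℝ) + 2)⌉₊ + p + 1)) :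
    Nat.card {s : Fin (n + k) → Sigma // LPAvoiding ℓ p s} ≥ q ^ n := by
  classical
  set t := n / k with ht
  set h := ℓ / 2 with hh
  set c := ⌈Real.logb q (((n / k : ℕ) : ℝ) - ((ℓ / 2 : ℕ) : ℝ) + 2)⌉₊ with hc
  have hℓ2h : ℓ = 2 * h := by
    obtain ⟨r, hr⟩ := hle
    omega
  have hhp' : p + 1 + c ≤ h := by omega
  have hT : (((n / k : ℕ) : ℝ) - ((ℓ / 2 : ℕ) : ℝ) + 2) = ((t - h + 2 : ℕ) : ℝ) := by
    rw [← ht, ← hh]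
    push_cast [Nat.cast_sub hlnk]
    ring
  have hTc : t + 1 - h + 1 ≤ q ^ c := by
    have h1 : (t - h + 2) ≤ q ^ c := by
      have h2 := le_pow_ceil_logb (T := t - h + 2) hq (by omega)
      rw [hc, hT]
      exact h2
    omega
  have hB := block_count hq hcard hp (by omega : h + 1 ≤ t + 1) hhp' hTc
  have hBt : q ^ t ≤ Fintype.card {x : Fin (t + 1) → Sigma // LPAvoiding h p x} := by
    have e : t + 1 - 1 = t := by omega
    rwa [e] at hB
  have htk : t * k = n := Nat.div_mul_cancel hkn
  have hnk : n + k = k * (t + 1) := by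
    have e : k * (t + 1) = t * k + k := by ring
    omega
  have hdiv : ∀ v : Fin (n + k), v.val / (t + 1) < k := by
    intro v
    have hv := v.isLt
    rw [Nat.div_lt_iff_lt_mul (by omega : 0 < t + 1)]
    omega
  have hmod : ∀ v : Fin (n + k), v.val % (t + 1) < t + 1 := by
    intro v
    exact Nat.mod_lt _ (by omega)
  -- the concatenation map
  set F : (Fin k → {x : Fin (t + 1) → Sigma // LPAvoiding h p x}) →
      {s : Fin (n + k) → Sigma // LPAvoiding ℓ p s} := fun xs =>
    ⟨fun v => (xs ⟨v.val / (t + 1), hdiv v⟩).val ⟨v.val % (t + 1), hmod v⟩, by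
      apply concat_lpa hℓ2h (by omega : 1 ≤ h) hlnk hnk
        (fun b => (xs b).val) (fun b => (xs b).2)
      intro β j hβ hj hv
      have hdv : (β * (t + 1) + j) / (t + 1) = β := by
        rw [mul_comm β, Nat.mul_add_div (by omega), Nat.div_eq_of_lt hj, add_zero]
      have hmv : (β * (t + 1) + j) % (t + 1) = j := by
        rw [mul_comm β, Nat.mul_add_mod, Nat.mod_eq_of_lt hj]
      exact fin_app_congr2 (fun b w => (xs b).val w) _ _ _ _ hdv hmv⟩ with hF
  have hFapp : ∀ (xs : Fin k → {x : Fin (t + 1) → Sigma // LPAvoiding h p x})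
      (b : Fin k) (w : Fin (t + 1)) (hv : b.val * (t + 1) + w.val < n + k),
      (F xs).val ⟨b.val * (t + 1) + w.val, hv⟩ = (xs b).val w := by
    intro xs b w hv
    have hdv : (b.val * (t + 1) + w.val) / (t + 1) = b.val := by
      rw [mul_comm b.val, Nat.mul_add_div (by omega), Nat.div_eq_of_lt w.isLt, add_zero]
    have hmv : (b.val * (t + 1) + w.val) % (t + 1) = w.val := by
      rw [mul_comm b.val, Nat.mul_add_mod, Nat.mod_eq_of_lt w.isLt]
    show (xs ⟨(b.val * (t + 1) + w.val) / (t + 1), _⟩).val ⟨(b.val * (t + 1) + w.val) % (t + 1), _⟩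
        = (xs b).val w
    have e2 := fin_app_congr2 (fun bb ww => (xs bb).val ww)
      (hdiv ⟨b.val * (t + 1) + w.val, hv⟩) b.isLt (hmod ⟨b.val * (t + 1) + w.val, hv⟩) w.isLt hdv hmv
    simpa using e2
  have hvlt : ∀ (b : Fin k) (w : Fin (t + 1)), b.val * (t + 1) + w.val < n + k := by
    intro b w
    have h1 : (b.val + 1) * (t + 1) ≤ k * (t + 1) := Nat.mul_le_mul_right _ (by omega)
    have h2 : (b.val + 1) * (t + 1) = b.val * (t + 1) + (t + 1) := by ring
    have := w.isLt
    omega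
  have hFinj : Function.Injective F := by
    intro xs ys hxy
    funext b
    apply Subtype.ext
    funext w
    have h1 := hFapp xs b w (hvlt b w)
    have h2 := hFapp ys b w (hvlt b w)
    rw [← h1, ← h2, hxy]
  have hcardle := Nat.card_le_card_of_injective F hFinj
  have hc1 : Nat.card (Fin k → {x : Fin (t + 1) → Sigma // LPAvoiding h p x})
      = Fintype.card {x : Fin (t + 1) → Sigma // LPAvoiding h p x} ^ k := by
    rw [Nat.card_eq_fintype_card, Fintype.card_fun, Fintype.card_fin]
  calc (q : ℕ) ^ n = (q ^ t) ^ k := by rw [← pow_mul, htk]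
    _ ≤ Fintype.card {x : Fin (t + 1) → Sigma // LPAvoiding h p x} ^ k :=
        Nat.pow_le_pow_left hBt k
    _ = Nat.card (Fin k → {x : Fin (t + 1) → Sigma // LPAvoiding h p x}) := hc1.symm
    _ ≤ Nat.card {s : Fin (n + k) → Sigma // LPAvoiding ℓ p s} := hcardle
end
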